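/- Let (𝒳, 𝒴) be an admissible balanced pair in an abelian category 𝒜 and (𝒞, 𝒟) a relative cotorsion pair. Then (𝒞, 𝒟) has enough projectives (for every M there exists a ⁎-acyclic sequence 0 → D → C → M → 0 with C ∈ 𝒞, D ∈ 𝒟) if and only if it has enough injectives (for every M there exists a ⁎-acyclic sequence 0 → M → D → C → 0 with C ∈ 𝒞, D ∈ 𝒟). -/

import Mathlib

open CategoryTheory Limits

universe v u

variable {A : Type u} [Category.{v} A] [Abelian A]

/-- `Hom(X, -)` for `X ∈ 𝒳` carries the short complex `S` to a short exact
sequence of abelian groups. -/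
def SESRightAcyclic (𝒳 : Set A) (S : ShortComplex A) : Prop :=
  ∀ X ∈ 𝒳,
    (Function.Injective fun h : X ⟶ S.X₁ => h ≫ S.f) ∧
    (∀ h : X ⟶ S.X₂, h ≫ S.g = 0 → ∃ k : X ⟶ S.X₁, k ≫ S.f = h) ∧
    (Function.Surjective fun h : X ⟶ S.X₂ => h ≫ S.g)

/-- `Hom(-, Y)` for `Y ∈ 𝒴` carries the short complex `S` to a short exact
sequence of abelian groups. -/
def SESLeftAcyclic (𝒴 : Set A) (S : ShortComplex A) : Prop :=
  ∀ Y ∈ 𝒴,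
    (Function.Injective fun h : S.X₃ ⟶ Y => S.g ≫ h) ∧
    (∀ h : S.X₂ ⟶ Y, S.f ≫ h = 0 → ∃ k : S.X₃ ⟶ Y, S.g ≫ k = h) ∧
    (Function.Surjective fun h : S.X₂ ⟶ Y => S.f ≫ h)

/-- A `⁎`-acyclic short exact sequence: short exact, right `𝒳`-acyclic and
left `𝒴`-acyclic. -/
def SESStarAcyclic (𝒳 𝒴 : Set A) (S : ShortComplex A) : Prop :=
  S.ShortExact ∧ SESRightAcyclic 𝒳 S ∧ SESLeftAcyclic 𝒴 S

/-- A cochain complex `C` is right `𝒳`-acyclic if `Hom(X, C)` is acyclic for every `X ∈ 𝒳`. -/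
def RightAcyclicComplex (𝒳 : Set A) (C : CochainComplex A ℤ) : Prop :=
  ∀ X ∈ 𝒳, ∀ n : ℤ, ∀ h : X ⟶ C.X n, h ≫ C.d n (n + 1) = 0 →
    ∃ k : X ⟶ C.X (n - 1), k ≫ C.d (n - 1) n = h

/-- A cochain complex `C` is left `𝒴`-acyclic if `Hom(C, Y)` is acyclic for every `Y ∈ 𝒴`. -/
def LeftAcyclicComplex (𝒴 : Set A) (C : CochainComplex A ℤ) : Prop :=
  ∀ Y ∈ 𝒴, ∀ n : ℤ, ∀ h : C.X n ⟶ Y, C.d (n - 1) n ≫ h = 0 →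
    ∃ k : C.X (n + 1) ⟶ Y, C.d n (n + 1) ≫ k = h

/-- `f` is a right `𝒳`-quasi-isomorphism iff its mapping cone is right `𝒳`-acyclic. -/
noncomputable def RightQuasiIso (𝒳 : Set A) {C D : CochainComplex A ℤ} (f : C ⟶ D) : Prop :=
  RightAcyclicComplex 𝒳 (CochainComplex.mappingCone f)

/-- `f` is a `⁎`-quasi-isomorphism: its mapping cone is right `𝒳`-acyclic and left `𝒴`-acyclic. -/
noncomputable def StarQuasiIso (𝒳 𝒴 : Set A) {C D : CochainComplex A ℤ} (f : C ⟶ D) : Prop :=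
  RightAcyclicComplex 𝒳 (CochainComplex.mappingCone f) ∧
    LeftAcyclicComplex 𝒴 (CochainComplex.mappingCone f)

/-- A bounded-above complex with all components in `𝒳`. -/
def MinusComplexIn (𝒳 : Set A) (C : CochainComplex A ℤ) : Prop :=
  (∃ b : ℤ, ∀ i : ℤ, b < i → IsZero (C.X i)) ∧ ∀ i : ℤ, C.X i ∈ 𝒳

/-- A bounded complex. -/
def BoundedComplex (C : CochainComplex A ℤ) : Prop :=
  ∃ a b : ℤ, ∀ i : ℤ, i < a ∨ b < i → IsZero (C.X i)

/-- A proper `𝒳`-resolution `⋯ → P⁻¹ → P⁰ —ε→ M → 0`: the components of `P` in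
nonpositive degrees lie in `𝒳`, the positive components vanish, and the augmented
complex is right `𝒳`-acyclic. -/
def IsProperXResolution (𝒳 : Set A) (M : A) (P : CochainComplex A ℤ) (ε : P.X 0 ⟶ M) : Prop :=
  (∀ i : ℤ, 0 < i → IsZero (P.X i)) ∧ (∀ i : ℤ, i ≤ 0 → P.X i ∈ 𝒳) ∧
  P.d (-1) 0 ≫ ε = 0 ∧
  ∀ X ∈ 𝒳,
    (∀ h : X ⟶ M, ∃ k : X ⟶ P.X 0, k ≫ ε = h) ∧
    (∀ h : X ⟶ P.X 0, h ≫ ε = 0 → ∃ k : X ⟶ P.X (-1), k ≫ P.d (-1) 0 = h) ∧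
    (∀ n : ℤ, n < 0 → ∀ h : X ⟶ P.X n, h ≫ P.d n (n + 1) = 0 →
      ∃ k : X ⟶ P.X (n - 1), k ≫ P.d (n - 1) n = h)

/-- The augmented complex `⋯ → P⁻¹ → P⁰ —ε→ M → 0` is left `𝒴`-acyclic. -/
def AugResLeftAcyclic (𝒴 : Set A) (M : A) (P : CochainComplex A ℤ) (ε : P.X 0 ⟶ M) : Prop :=
  ∀ Y ∈ 𝒴,
    (∀ h : M ⟶ Y, ε ≫ h = 0 → h = 0) ∧
    (∀ h : P.X 0 ⟶ Y, P.d (-1) 0 ≫ h = 0 → ∃ k : M ⟶ Y, ε ≫ k = h) ∧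
    (∀ n : ℤ, n < 0 → ∀ h : P.X n ⟶ Y, P.d (n - 1) n ≫ h = 0 →
      ∃ k : P.X (n + 1) ⟶ Y, P.d n (n + 1) ≫ k = h)

/-- A proper `𝒴`-coresolution `0 → N —η→ Q⁰ → Q¹ → ⋯`. -/
def IsProperYCoresolution (𝒴 : Set A) (N : A) (Q : CochainComplex A ℤ) (η : N ⟶ Q.X 0) : Prop :=
  (∀ i : ℤ, i < 0 → IsZero (Q.X i)) ∧ (∀ i : ℤ, 0 ≤ i → Q.X i ∈ 𝒴) ∧
  η ≫ Q.d 0 1 = 0 ∧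
  ∀ Y ∈ 𝒴,
    (∀ h : N ⟶ Y, ∃ k : Q.X 0 ⟶ Y, η ≫ k = h) ∧
    (∀ h : Q.X 0 ⟶ Y, η ≫ h = 0 → ∃ k : Q.X 1 ⟶ Y, Q.d 0 1 ≫ k = h) ∧
    (∀ n : ℤ, 0 < n → ∀ h : Q.X n ⟶ Y, Q.d (n - 1) n ≫ h = 0 →
      ∃ k : Q.X (n + 1) ⟶ Y, Q.d n (n + 1) ≫ k = h)

/-- The augmented complex `0 → N —η→ Q⁰ → Q¹ → ⋯` is right `𝒳`-acyclic. -/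
def AugCoresRightAcyclic (𝒳 : Set A) (N : A) (Q : CochainComplex A ℤ) (η : N ⟶ Q.X 0) : Prop :=
  ∀ X ∈ 𝒳,
    (∀ h : X ⟶ N, h ≫ η = 0 → h = 0) ∧
    (∀ h : X ⟶ Q.X 0, h ≫ Q.d 0 1 = 0 → ∃ k : X ⟶ N, k ≫ η = h) ∧
    (∀ n : ℤ, 0 < n → ∀ h : X ⟶ Q.X n, h ≫ Q.d n (n + 1) = 0 →
      ∃ k : X ⟶ Q.X (n - 1), k ≫ Q.d (n - 1) n = h)

/-- `f : X ⟶ M` is a right `𝒳`-approximation of `M`. -/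
def IsRightApprox (𝒳 : Set A) {X M : A} (f : X ⟶ M) : Prop :=
  X ∈ 𝒳 ∧ ∀ X' ∈ 𝒳, ∀ g : X' ⟶ M, ∃ h : X' ⟶ X, h ≫ f = g

/-- `f : M ⟶ Y` is a left `𝒴`-approximation of `M`. -/
def IsLeftApprox (𝒴 : Set A) {M Y : A} (f : M ⟶ Y) : Prop :=
  Y ∈ 𝒴 ∧ ∀ Y' ∈ 𝒴, ∀ g : M ⟶ Y', ∃ h : Y ⟶ Y', f ≫ h = g

/-- A minimal (right minimal) right `𝒳`-approximation. -/
def IsMinimalRightApprox (𝒳 : Set A) {X M : A} (f : X ⟶ M) : Prop :=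
  IsRightApprox 𝒳 f ∧ ∀ s : X ⟶ X, s ≫ f = f → IsIso s

/-- A minimal (left minimal) left `𝒴`-approximation. -/
def IsMinimalLeftApprox (𝒴 : Set A) {M Y : A} (f : M ⟶ Y) : Prop :=
  IsLeftApprox 𝒴 f ∧ ∀ s : Y ⟶ Y, f ≫ s = f → IsIso s

/-- `(𝒳, 𝒴)` is a balanced pair: `𝒳` is contravariantly finite, `𝒴` is covariantly
finite, every object has a left `𝒴`-acyclic proper `𝒳`-resolution and a right
`𝒳`-acyclic proper `𝒴`-coresolution. -/
def IsBalancedPair (𝒳 𝒴 : Set A) : Prop :=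
  (∀ M : A, ∃ (X : A) (f : X ⟶ M), IsRightApprox 𝒳 f) ∧
  (∀ M : A, ∃ (Y : A) (f : M ⟶ Y), IsLeftApprox 𝒴 f) ∧
  (∀ M : A, ∃ (P : CochainComplex A ℤ) (ε : P.X 0 ⟶ M),
    IsProperXResolution 𝒳 M P ε ∧ AugResLeftAcyclic 𝒴 M P ε) ∧
  (∀ N : A, ∃ (Q : CochainComplex A ℤ) (η : N ⟶ Q.X 0),
    IsProperYCoresolution 𝒴 N Q η ∧ AugCoresRightAcyclic 𝒳 N Q η)

/-- Vanishing of the relative Ext group `Ext⁎ⁱ(M, N)`: the `i`-th cohomology of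
`Hom(P, N)` vanishes for every proper `𝒳`-resolution `P` of `M`. -/
def ExtStarVanish (𝒳 : Set A) (i : ℕ) (M N : A) : Prop :=
  ∀ (P : CochainComplex A ℤ) (ε : P.X 0 ⟶ M), IsProperXResolution 𝒳 M P ε →
    ∀ h : P.X (-(i : ℤ)) ⟶ N, P.d (-(i : ℤ) - 1) (-(i : ℤ)) ≫ h = 0 →
      ∃ k : P.X (-(i : ℤ) + 1) ⟶ N, P.d (-(i : ℤ)) (-(i : ℤ) + 1) ≫ k = h

/-- A cotorsion pair relative to the balanced pair `(𝒳, 𝒴)`, defined by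
orthogonality with respect to `Ext⁎¹`. -/
def IsRelCotorsionPair (𝒳 𝒞 𝒟 : Set A) : Prop :=
  (∀ C : A, C ∈ 𝒞 ↔ ∀ D ∈ 𝒟, ExtStarVanish 𝒳 1 C D) ∧
  (∀ D : A, D ∈ 𝒟 ↔ ∀ C ∈ 𝒞, ExtStarVanish 𝒳 1 C D)

/-- `𝒳` is admissible: every right `𝒳`-approximation is an epimorphism. -/
def XAdmissible (𝒳 : Set A) : Prop :=
  ∀ (X M : A) (f : X ⟶ M), IsRightApprox 𝒳 f → Epi f

/-- `𝒴` is coadmissible: every left `𝒴`-approximation is a monomorphism. -/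
def YCoadmissible (𝒴 : Set A) : Prop :=
  ∀ (M Y : A) (f : M ⟶ Y), IsLeftApprox 𝒴 f → Mono f

/-- `𝒳`-resolution dimension of `M` is at most `n`. -/
def XResdimLE (𝒳 : Set A) (n : ℕ) (M : A) : Prop :=
  ∃ (P : CochainComplex A ℤ) (ε : P.X 0 ⟶ M),
    IsProperXResolution 𝒳 M P ε ∧ ∀ i : ℤ, i < -(n : ℤ) → IsZero (P.X i)

/-- `𝒴`-coresolution dimension of `N` is at most `n`. -/
def YCoresdimLE (𝒴 : Set A) (n : ℕ) (N : A) : Prop :=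
  ∃ (Q : CochainComplex A ℤ) (η : N ⟶ Q.X 0),
    IsProperYCoresolution 𝒴 N Q η ∧ ∀ i : ℤ, (n : ℤ) < i → IsZero (Q.X i)

/-!
Admissibility lets `Ext⁎¹(M, N)` be read off any right `𝒳`-approximation `ρ : W ⟶ M`: it
vanishes iff every map `ker ρ ⟶ N` extends to `W`. Left `𝒴`-acyclicity of proper resolutions then
gives `Ext⁎¹(M, Y) = 0` for `Y ∈ 𝒴`, so `𝒴 ⊆ 𝒟`.

Enough projectives ⇒ enough injectives: with `0 → M → Q⁰ → L → 0`, `L = ker (Q¹ ⟶ Q²)`, from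
a proper `𝒴`-coresolution, pull a special precover `0 → D → C → L → 0` back along `Q⁰ ⟶ L`. The
pullback `T` gives `0 → M → T → C → 0`, and it lies in `𝒟` as an extension of `Q⁰ ∈ 𝒴` by `D ∈ 𝒟`.

Enough injectives ⇒ enough projectives: with `0 → K → P⁰ → M → 0` from a proper
`𝒳`-resolution, push a special preenvelope `0 → K → D → C → 0` out along `K ⟶ P⁰`. The pushout
`T` gives `0 → D → T → M → 0`, and it lies in `𝒞`: for an approximation `ρ` of `T`, `ρ ≫ (T ⟶ C)`
approximates `C`, and since `P⁰ ∈ 𝒳`, `ker ρ` is a retract of its kernel.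
-/

def IsContravariantlyFinite (𝒳 : Set A) : Prop :=
  ∀ M : A, ∃ (X : A) (f : X ⟶ M), IsRightApprox 𝒳 f

section Detection

variable {𝒳 : Set A}

lemma eq_zero_of_forall_comp_eq_zero (hfin : IsContravariantlyFinite 𝒳) (hadm : XAdmissible 𝒳)
    {W M : A} (t : W ⟶ M) (h : ∀ X ∈ 𝒳, ∀ u : X ⟶ W, u ≫ t = 0) : t = 0 := by
  obtain ⟨X, e, he⟩ := hfin W
  have := hadm _ _ e he
  rw [← cancel_epi e, comp_zero]
  exact h X he.1 e

lemma epi_of_forall_lift (hfin : IsContravariantlyFinite 𝒳) (hadm : XAdmissible 𝒳)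
    {W M : A} (f : W ⟶ M) (h : ∀ X ∈ 𝒳, ∀ u : X ⟶ M, ∃ v : X ⟶ W, v ≫ f = u) : Epi f := by
  refine Preadditive.epi_of_cancel_zero _ fun t hft => ?_
  refine eq_zero_of_forall_comp_eq_zero hfin hadm t fun X hX u => ?_
  obtain ⟨v, rfl⟩ := h X hX u
  rw [Category.assoc, hft, comp_zero]

lemma CategoryTheory.ShortComplex.exact_of_forall_lift (hfin : IsContravariantlyFinite 𝒳)
    (hadm : XAdmissible 𝒳) {S : ShortComplex A}
    (h : ∀ X ∈ 𝒳, ∀ u : X ⟶ S.X₂, u ≫ S.g = 0 → ∃ v : X ⟶ S.X₁, v ≫ S.f = u) : S.Exact := by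
  rw [S.exact_iff_epi_kernel_lift]
  refine epi_of_forall_lift hfin hadm _ fun X hX u => ?_
  obtain ⟨v, hv⟩ := h X hX (u ≫ kernel.ι _) (by simp)
  exact ⟨v, by ext; simp [hv]⟩

end Detection

namespace CategoryTheory.ShortComplex.ShortExact

variable {S : ShortComplex A}

lemma sesRightAcyclic {𝒳 : Set A} (hS : S.ShortExact)
    (h : ∀ X ∈ 𝒳, Function.Surjective fun u : X ⟶ S.X₂ => u ≫ S.g) : SESRightAcyclic 𝒳 S := by
  have := hS.mono_f
  exact fun X hX => ⟨fun _ _ huv => (cancel_mono S.f).mp huv,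
    fun u hu => ⟨hS.exact.lift u hu, hS.exact.lift_f u hu⟩, h X hX⟩

lemma sesLeftAcyclic {𝒴 : Set A} (hS : S.ShortExact)
    (h : ∀ Y ∈ 𝒴, Function.Surjective fun u : S.X₂ ⟶ Y => S.f ≫ u) : SESLeftAcyclic 𝒴 S := by
  have := hS.epi_g
  exact fun Y hY => ⟨fun _ _ huv => (cancel_epi S.g).mp huv,
    fun u hu => ⟨hS.exact.desc u hu, hS.exact.g_desc u hu⟩, h Y hY⟩

end CategoryTheory.ShortComplex.ShortExact

section BaseChange

variable {K P X Y Z : A}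

lemma CategoryTheory.IsPullback.shortExact {fst : P ⟶ X} {snd : P ⟶ Y} {f : X ⟶ Z}
    {g : Y ⟶ Z} (sq : IsPullback fst snd f g) {i : K ⟶ X} {w : i ≫ f = 0}
    (hS : (ShortComplex.mk i f w).ShortExact) :
    (ShortComplex.mk (sq.lift i 0 (by simp [w])) snd (sq.lift_snd _ _ _)).ShortExact := by
  have := hS.mono_f
  have := hS.epi_g
  have : Epi snd :=
    MorphismProperty.of_isPullback (P := MorphismProperty.epimorphisms A) sq ‹Epi f›
  have : Mono (sq.lift i (0 : K ⟶ Y) (by simp [w])) := mono_of_mono_fac (sq.lift_fst _ _ _)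
  refine .mk' (ShortComplex.exact_of_f_is_kernel _ <|
    KernelFork.IsLimit.ofι' (sq.lift i 0 _) _ fun {W} t ht => ?_) this ‹_›
  have htf : (t ≫ fst) ≫ f = 0 := by rw [Category.assoc, sq.w, reassoc_of% ht, zero_comp]
  refine ⟨hS.exact.lift (t ≫ fst) htf, sq.hom_ext ?_ ?_⟩
  · simpa using hS.exact.lift_f (t ≫ fst) htf
  · simpa using ht.symm

lemma CategoryTheory.IsPushout.shortExact {i : K ⟶ X} {f : K ⟶ Y} {inl : X ⟶ P}
    {inr : Y ⟶ P} (sq : IsPushout i f inl inr) {g : Y ⟶ Z} {w : f ≫ g = 0}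
    (hS : (ShortComplex.mk f g w).ShortExact) :
    (ShortComplex.mk inl (sq.desc 0 g (by simp [w])) (sq.inl_desc _ _ _)).ShortExact := by
  have := hS.mono_f
  have := hS.epi_g
  have : Mono inl :=
    MorphismProperty.of_isPushout (P := MorphismProperty.monomorphisms A) sq ‹Mono f›
  have : Epi (sq.desc (0 : X ⟶ Z) g (by simp [w])) := epi_of_epi_fac (sq.inr_desc _ _ _)
  refine .mk' (ShortComplex.exact_of_g_is_cokernel _ <|
    CokernelCofork.IsColimit.ofπ' (sq.desc 0 g _) _ fun {W} t ht => ?_) ‹_› this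
  have hft : f ≫ inr ≫ t = 0 := by rw [← Category.assoc, ← sq.w, Category.assoc, ht, comp_zero]
  refine ⟨hS.exact.desc (inr ≫ t) hft, sq.hom_ext ?_ ?_⟩
  · simpa using ht.symm
  · simpa using hS.exact.g_desc (inr ≫ t) hft

end BaseChange

section RelativeExt

variable {𝒳 : Set A} {M N : A}

lemma extStarVanish_one_iff :
    ExtStarVanish 𝒳 1 M N ↔ ∀ (P : CochainComplex A ℤ) (ε : P.X 0 ⟶ M),
      IsProperXResolution 𝒳 M P ε → ∀ h : P.X (-1) ⟶ N, P.d (-2) (-1) ≫ h = 0 →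
        ∃ k : P.X 0 ⟶ N, P.d (-1) 0 ≫ k = h :=
  Iff.rfl

lemma IsProperXResolution.isRightApprox {P : CochainComplex A ℤ} {ε : P.X 0 ⟶ M}
    (hP : IsProperXResolution 𝒳 M P ε) : IsRightApprox 𝒳 ε :=
  ⟨hP.2.1 0 le_rfl, fun X hX => (hP.2.2.2 X hX).1⟩

lemma IsProperXResolution.forall_coboundary_iff (hfin : IsContravariantlyFinite 𝒳)
    (hadm : XAdmissible 𝒳) {P : CochainComplex A ℤ} {ε : P.X 0 ⟶ M}
    (hP : IsProperXResolution 𝒳 M P ε) :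
    (∀ h : P.X (-1) ⟶ N, P.d (-2) (-1) ≫ h = 0 → ∃ k : P.X 0 ⟶ N, P.d (-1) 0 ≫ k = h) ↔
      Function.Surjective fun k : P.X 0 ⟶ N => kernel.ι ε ≫ k := by
  -- `γ : P⁻¹ ⟶ ker ε` is epi with kernel the image of `P⁻²`, so `Hom(ker ε, N)` is the group of
  -- cocycles on `P⁻¹`
  set γ := kernel.lift ε (P.d (-1) 0) hP.2.2.1
  have hγι : γ ≫ kernel.ι ε = P.d (-1) 0 := kernel.lift_ι _ _ _
  have : Epi γ := epi_of_forall_lift hfin hadm γ fun X hX u => by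
    obtain ⟨v, hv⟩ := (hP.2.2.2 X hX).2.1 (u ≫ kernel.ι ε) (by simp)
    exact ⟨v, by rw [← cancel_mono (kernel.ι ε), Category.assoc, hγι, hv]⟩
  constructor
  · intro hcob t
    have hdγ : P.d (-2) (-1) ≫ γ = 0 := by
      rw [← cancel_mono (kernel.ι ε), Category.assoc, hγι, P.d_comp_d, zero_comp]
    obtain ⟨k, hk⟩ := hcob (γ ≫ t) (by rw [reassoc_of% hdγ, zero_comp])
    exact ⟨k, by rw [← cancel_epi γ, reassoc_of% hγι, hk]⟩
  · intro hsurj h hh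
    have hκ : kernel.ι γ ≫ h = 0 := eq_zero_of_forall_comp_eq_zero hfin hadm _ fun X hX u => by
      obtain ⟨v, hv⟩ := (hP.2.2.2 X hX).2.2 (-1) (by norm_num) (u ≫ kernel.ι γ)
        (by simp [← hγι])
      rw [← Category.assoc, ← hv, Category.assoc]
      exact (congrArg _ hh).trans comp_zero
    obtain ⟨k, hk : kernel.ι ε ≫ k = _⟩ := hsurj (Abelian.epiDesc γ h hκ)
    exact ⟨k, by rw [← hγι, Category.assoc, hk, Abelian.comp_epiDesc]⟩

lemma surjective_kernelι_comp_of_factor {W V : A} {ρ : W ⟶ M} {ε : V ⟶ M}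
    (s : V ⟶ W) (hs : s ≫ ρ = ε) (r : W ⟶ V) (hr : r ≫ ε = ρ)
    (h : Function.Surjective fun k : V ⟶ N => kernel.ι ε ≫ k) :
    Function.Surjective fun k : W ⟶ N => kernel.ι ρ ≫ k := by
  intro t
  let c : W ⟶ kernel ρ := kernel.lift ρ (r ≫ s - 𝟙 W) (by simp [hs, hr])
  let sb : kernel ε ⟶ kernel ρ := kernel.map ε ρ s (𝟙 M) (by simp [hs])
  let rb : kernel ρ ⟶ kernel ε := kernel.map ρ ε r (𝟙 M) (by simp [hr])
  -- Schanuel: `rb ≫ sb` is the identity up to a map factoring through `W`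
  have hrs : rb ≫ sb = 𝟙 _ + kernel.ι ρ ≫ c := by ext; simp [rb, sb, c]
  obtain ⟨k, hk : kernel.ι ε ≫ k = sb ≫ t⟩ := h (sb ≫ t)
  refine ⟨r ≫ k - c ≫ t, ?_⟩
  calc kernel.ι ρ ≫ (r ≫ k - c ≫ t) = rb ≫ kernel.ι ε ≫ k - kernel.ι ρ ≫ c ≫ t := by
        simp [rb]
    _ = t := by
        rw [hk, ← Category.assoc, hrs]
        simp

lemma ExtStarVanish.surjective_kernelι_comp (hfin : IsContravariantlyFinite 𝒳)
    (hadm : XAdmissible 𝒳) (hv : ExtStarVanish 𝒳 1 M N) {P : CochainComplex A ℤ}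
    {ε : P.X 0 ⟶ M} (hP : IsProperXResolution 𝒳 M P ε) {W : A} {ρ : W ⟶ M}
    (hρ : IsRightApprox 𝒳 ρ) : Function.Surjective fun k : W ⟶ N => kernel.ι ρ ≫ k := by
  obtain ⟨s, hs⟩ := hρ.2 _ hP.isRightApprox.1 ε
  obtain ⟨r, hr⟩ := hP.isRightApprox.2 _ hρ.1 ρ
  exact surjective_kernelι_comp_of_factor s hs r hr
    ((hP.forall_coboundary_iff hfin hadm).mp (hv P ε hP))

lemma extStarVanish_of_surjective_kernelι_comp (hfin : IsContravariantlyFinite 𝒳)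
    (hadm : XAdmissible 𝒳) {W : A} {ρ : W ⟶ M} (hρ : IsRightApprox 𝒳 ρ)
    (h : Function.Surjective fun k : W ⟶ N => kernel.ι ρ ≫ k) : ExtStarVanish 𝒳 1 M N := by
  intro P ε hP
  obtain ⟨s, hs⟩ := hP.isRightApprox.2 _ hρ.1 ρ
  obtain ⟨r, hr⟩ := hρ.2 _ hP.isRightApprox.1 ε
  exact (hP.forall_coboundary_iff hfin hadm).mpr (surjective_kernelι_comp_of_factor s hs r hr h)

end RelativeExt

section Orthogonality

variable {𝒳 𝒴 : Set A} {M N : A}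

lemma AugResLeftAcyclic.surjective_kernelι_comp (hfin : IsContravariantlyFinite 𝒳)
    (hadm : XAdmissible 𝒳) {P : CochainComplex A ℤ} {ε : P.X 0 ⟶ M}
    (hP : IsProperXResolution 𝒳 M P ε) (haug : AugResLeftAcyclic 𝒴 M P ε) {Y : A}
    (hY : Y ∈ 𝒴) : Function.Surjective fun k : P.X 0 ⟶ Y => kernel.ι ε ≫ k :=
  (hP.forall_coboundary_iff hfin hadm).mp ((haug Y hY).2.2 (-1) (by norm_num))

lemma extStarVanish_of_mem_right (hbp : IsBalancedPair 𝒳 𝒴) (hadm : XAdmissible 𝒳) {Y : A}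
    (hY : Y ∈ 𝒴) (M : A) : ExtStarVanish 𝒳 1 M Y := by
  obtain ⟨P, ε, hP, haug⟩ := hbp.2.2.1 M
  exact extStarVanish_of_surjective_kernelι_comp hbp.1 hadm hP.isRightApprox
    (haug.surjective_kernelι_comp hbp.1 hadm hP hY)

lemma CategoryTheory.ShortComplex.ShortExact.extStarVanish_to_X₂ {S : ShortComplex A}
    (hS : S.ShortExact) (hlift : ∀ X ∈ 𝒳, Function.Surjective fun u : X ⟶ S.X₂ => u ≫ S.g)
    (h₁ : ExtStarVanish 𝒳 1 M S.X₁) (h₃ : ExtStarVanish 𝒳 1 M S.X₃) :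
    ExtStarVanish 𝒳 1 M S.X₂ := by
  rw [extStarVanish_one_iff] at h₁ h₃ ⊢
  intro P ε hP h hh
  obtain ⟨k₃, hk₃⟩ := h₃ P ε hP (h ≫ S.g) (by rw [← Category.assoc, hh, zero_comp])
  obtain ⟨k, hk : k ≫ S.g = k₃⟩ := hlift _ (hP.2.1 0 le_rfl) k₃
  have := hS.mono_f
  set h' := h - P.d _ _ ≫ k
  have hh' : h' ≫ S.g = 0 := by simp [h', hk, hk₃]
  obtain ⟨v, hv⟩ := h₁ P ε hP (hS.exact.lift h' hh') (by
    rw [← cancel_mono S.f, Category.assoc, hS.exact.lift_f, zero_comp]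
    simp [h', hh])
  exact ⟨v ≫ S.f + k, by rw [Preadditive.comp_add, reassoc_of% hv, hS.exact.lift_f, sub_add_cancel]⟩

lemma CategoryTheory.ShortComplex.ShortExact.surjective_kernelι_comp {S : ShortComplex A}
    (hS : S.ShortExact) {W : A} {ρ : W ⟶ S.X₂} (s : S.X₁ ⟶ W) (hs : s ≫ ρ = S.f)
    (h : Function.Surjective fun k : W ⟶ N => kernel.ι (ρ ≫ S.g) ≫ k) :
    Function.Surjective fun k : W ⟶ N => kernel.ι ρ ≫ k := by
  have := hS.mono_f
  -- `s` makes `kernel ρ` a retract of `kernel (ρ ≫ S.g)`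
  let φ : kernel (ρ ≫ S.g) ⟶ S.X₁ := hS.exact.lift (kernel.ι _ ≫ ρ) (by simp)
  let c : kernel (ρ ≫ S.g) ⟶ kernel ρ :=
    kernel.lift ρ (kernel.ι _ - φ ≫ s) (by simp [hs, φ])
  let a : kernel ρ ⟶ kernel (ρ ≫ S.g) := kernel.lift _ (kernel.ι ρ) (by simp)
  have haι : a ≫ kernel.ι (ρ ≫ S.g) = kernel.ι ρ := kernel.lift_ι _ _ _
  have haφ : a ≫ φ = 0 := by rw [← cancel_mono S.f]; simp [φ, reassoc_of% haι]
  have hac : a ≫ c = 𝟙 _ := by ext; simp [c, reassoc_of% haφ, haι]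
  intro t
  obtain ⟨k, hk : kernel.ι (ρ ≫ S.g) ≫ k = c ≫ t⟩ := h (c ≫ t)
  exact ⟨k, show kernel.ι ρ ≫ k = t by rw [← haι, Category.assoc, hk, reassoc_of% hac]⟩

lemma CategoryTheory.ShortComplex.ShortExact.extStarVanish_from_X₂
    (hfin : IsContravariantlyFinite 𝒳) (hadm : XAdmissible 𝒳) {S : ShortComplex A}
    (hS : S.ShortExact) (hX₁ : S.X₁ ∈ 𝒳)
    (hlift : ∀ X ∈ 𝒳, Function.Surjective fun u : X ⟶ S.X₂ => u ≫ S.g)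
    {P : CochainComplex A ℤ} {ε : P.X 0 ⟶ S.X₃} (hP : IsProperXResolution 𝒳 S.X₃ P ε)
    (h₃ : ExtStarVanish 𝒳 1 S.X₃ N) : ExtStarVanish 𝒳 1 S.X₂ N := by
  obtain ⟨W, ρ, hρ⟩ := hfin S.X₂
  have hρg : IsRightApprox 𝒳 (ρ ≫ S.g) := ⟨hρ.1, fun X hX u => by
    obtain ⟨v, rfl⟩ := hlift X hX u
    obtain ⟨w, rfl⟩ := hρ.2 X hX v
    exact ⟨w, (Category.assoc _ _ _).symm⟩⟩
  obtain ⟨s, hs⟩ := hρ.2 _ hX₁ S.f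
  exact extStarVanish_of_surjective_kernelι_comp hfin hadm hρ
    (hS.surjective_kernelι_comp s hs (h₃.surjective_kernelι_comp hfin hadm hP hρg))

end Orthogonality

section Coresolution

variable {𝒳 𝒴 : Set A} {M : A} {Q : CochainComplex A ℤ} {η : M ⟶ Q.X 0}

lemma AugCoresRightAcyclic.surjective_lift (haug : AugCoresRightAcyclic 𝒳 M Q η) {X : A}
    (hX : X ∈ 𝒳) : Function.Surjective fun v : X ⟶ Q.X 0 =>
      v ≫ kernel.lift (Q.d 1 2) (Q.d 0 1) (Q.d_comp_d _ _ _) := fun u => by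
  obtain ⟨v, hv⟩ := (haug X hX).2.2 1 one_pos (u ≫ kernel.ι _) (by simp)
  exact ⟨v, by ext; simpa using hv⟩

lemma AugCoresRightAcyclic.shortExact (hfin : IsContravariantlyFinite 𝒳)
    (hadm : XAdmissible 𝒳) (hQ : IsProperYCoresolution 𝒴 M Q η)
    (haug : AugCoresRightAcyclic 𝒳 M Q η) :
    (ShortComplex.mk η (kernel.lift (Q.d 1 2) (Q.d 0 1) (Q.d_comp_d _ _ _))
      (by ext; simpa using hQ.2.2.1)).ShortExact := by
  refine .mk' (ShortComplex.exact_of_forall_lift hfin hadm fun X hX u hu => ?_) ?_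
    (epi_of_forall_lift hfin hadm _ fun X hX => haug.surjective_lift hX)
  · exact (haug X hX).2.1 u (by simpa using hu =≫ kernel.ι (Q.d 1 2))
  · refine Preadditive.mono_of_cancel_zero _ fun t ht =>
      eq_zero_of_forall_comp_eq_zero hfin hadm t fun X hX u => ?_
    exact (haug X hX).1 _ (by rw [Category.assoc, ht, comp_zero])

end Coresolution

def CotorsionHasEnoughProjectives (𝒳 𝒴 𝒞 𝒟 : Set A) : Prop :=
  ∀ M : A, ∃ (C D : A) (f : D ⟶ C) (g : C ⟶ M) (w : f ≫ g = 0),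
    C ∈ 𝒞 ∧ D ∈ 𝒟 ∧ SESStarAcyclic 𝒳 𝒴 (ShortComplex.mk f g w)

def CotorsionHasEnoughInjectives (𝒳 𝒴 𝒞 𝒟 : Set A) : Prop :=
  ∀ M : A, ∃ (C D : A) (f : M ⟶ D) (g : D ⟶ C) (w : f ≫ g = 0),
    C ∈ 𝒞 ∧ D ∈ 𝒟 ∧ SESStarAcyclic 𝒳 𝒴 (ShortComplex.mk f g w)

section EnoughProjectivesInjectives

variable {𝒳 𝒴 𝒞 𝒟 : Set A}

lemma CotorsionHasEnoughProjectives.enoughInjectives (hbp : IsBalancedPair 𝒳 𝒴)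
    (hadm : XAdmissible 𝒳) (hcp : IsRelCotorsionPair 𝒳 𝒞 𝒟)
    (hEP : CotorsionHasEnoughProjectives 𝒳 𝒴 𝒞 𝒟) : CotorsionHasEnoughInjectives 𝒳 𝒴 𝒞 𝒟 := by
  intro M
  obtain ⟨Q, η, hQ, haug⟩ := hbp.2.2.2 M
  have hS₀ := haug.shortExact hbp.1 hadm hQ
  obtain ⟨C, D, f, g, w, hC, hD, hS, hSr, -⟩ := hEP (kernel (Q.d 1 2))
  -- `T` is the pullback of `C ⟶ ker d¹ ⟵ Q⁰`: it extends `C` by `M` and `Q⁰` by `D`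
  have sq := IsPullback.of_hasPullback g (kernel.lift (Q.d 1 2) (Q.d 0 1) (Q.d_comp_d _ _ _))
  have hT := sq.flip.shortExact hS₀
  refine ⟨C, _, _, _, _, hC, ?_, hT, hT.sesRightAcyclic fun X hX u => ?_,
    hT.sesLeftAcyclic fun Y hY u => ?_⟩
  · refine (hcp.2 _).mpr fun C' hC' => (sq.shortExact hS).extStarVanish_to_X₂ (fun X hX u => ?_)
      ((hcp.2 D).mp hD C' hC') (extStarVanish_of_mem_right hbp hadm (hQ.2.1 0 le_rfl) C')
    obtain ⟨v, hv⟩ := (hSr X hX).2.2 (u ≫ _)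
    exact ⟨sq.lift v u hv, sq.lift_snd _ _ _⟩
  · obtain ⟨v, hv⟩ := haug.surjective_lift hX (u ≫ g)
    exact ⟨sq.lift u v hv.symm, sq.lift_fst _ _ _⟩
  · obtain ⟨k, hk⟩ := (hQ.2.2.2 Y hY).1 u
    exact ⟨pullback.snd _ _ ≫ k, by simpa using hk⟩

lemma CotorsionHasEnoughInjectives.enoughProjectives (hbp : IsBalancedPair 𝒳 𝒴)
    (hadm : XAdmissible 𝒳) (hcp : IsRelCotorsionPair 𝒳 𝒞 𝒟)
    (hEI : CotorsionHasEnoughInjectives 𝒳 𝒴 𝒞 𝒟) : CotorsionHasEnoughProjectives 𝒳 𝒴 𝒞 𝒟 := by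
  intro M
  obtain ⟨P, ε, hP, haug⟩ := hbp.2.2.1 M
  have : Epi ε := hadm _ _ ε hP.isRightApprox
  have hS₀ : (ShortComplex.mk (kernel.ι ε) ε (kernel.condition ε)).ShortExact :=
    .mk' (ShortComplex.exact_of_f_is_kernel _ (kernelIsKernel ε)) inferInstance this
  obtain ⟨C, D, f, g, w, hC, hD, hS, hSr, -⟩ := hEI (kernel ε)
  -- `T` is the pushout of `P⁰ ⟵ K ⟶ D`: it extends `M` by `D` and `C` by `P⁰`
  have sq := IsPushout.of_hasPushout (kernel.ι ε) f
  have hT := sq.flip.shortExact hS₀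
  refine ⟨_, D, _, _, _, ?_, hD, hT, hT.sesRightAcyclic fun X hX u => ?_,
    hT.sesLeftAcyclic fun Y hY u => ?_⟩
  · obtain ⟨PC, εC, hPC, -⟩ := hbp.2.2.1 C
    refine (hcp.1 _).mpr fun D' hD' => (sq.shortExact hS).extStarVanish_from_X₂ hbp.1 hadm
      (hP.2.1 0 le_rfl) (fun X hX u => ?_) hPC ((hcp.1 C).mp hC D' hD')
    obtain ⟨v, hv⟩ := (hSr X hX).2.2 u
    exact ⟨v ≫ pushout.inr _ _, by simpa using hv⟩
  · obtain ⟨v, hv⟩ := (hP.2.2.2 X hX).1 u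
    exact ⟨v ≫ pushout.inl _ _, by simpa using hv⟩
  · obtain ⟨k, hk⟩ := haug.surjective_kernelι_comp hbp.1 hadm hP hY (f ≫ u)
    exact ⟨sq.desc k u hk, sq.inr_desc _ _ _⟩

end EnoughProjectivesInjectives

theorem stmt9 (𝒳 𝒴 𝒞 𝒟 : Set A) (hbp : IsBalancedPair 𝒳 𝒴) (hadm : XAdmissible 𝒳)
    (hcp : IsRelCotorsionPair 𝒳 𝒞 𝒟) :
    (∀ M : A, ∃ (C D : A) (f : D ⟶ C) (g : C ⟶ M) (w : f ≫ g = 0),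
        C ∈ 𝒞 ∧ D ∈ 𝒟 ∧ SESStarAcyclic 𝒳 𝒴 (ShortComplex.mk f g w)) ↔
    (∀ M : A, ∃ (C D : A) (f : M ⟶ D) (g : D ⟶ C) (w : f ≫ g = 0),
        C ∈ 𝒞 ∧ D ∈ 𝒟 ∧ SESStarAcyclic 𝒳 𝒴 (ShortComplex.mk f g w)) :=
  ⟨CotorsionHasEnoughProjectives.enoughInjectives hbp hadm hcp,
    CotorsionHasEnoughInjectives.enoughProjectives hbp hadm hcp⟩
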